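/- For the pure odd-even mode u_j = (−1)^j, Shen's sixth-order conservative scheme returns exactly zero at every point j, i.e., the sawtooth mode lies in the kernel of the discrete diffusion operator, while the sixth-order α-damping scheme returns (−272/45)(−1)^j/Δx² ≠ 0. -/

import Mathlib

open Real

/-- Sixth-order central-difference cell-center gradient applied to a sequence. -/
noncomputable def grad6U (Δx : ℝ) (u : ℤ → ℂ) (m : ℤ) : ℂ :=
  (45 * (u (m+1) - u (m-1)) - 9 * (u (m+2) - u (m-2)) + (u (m+3) - u (m-3)))
    / (60 * (Δx : ℂ))

/-- Shen's interface numerical flux `F̂_{j+1/2}`. -/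
noncomputable def shenFluxU (Δx : ℝ) (u : ℤ → ℂ) (j : ℤ) : ℂ :=
  (3 * grad6U Δx u (j-2) - 25 * grad6U Δx u (j-1) + 150 * grad6U Δx u j
    + 150 * grad6U Δx u (j+1) - 25 * grad6U Δx u (j+2) + 3 * grad6U Δx u (j+3)) / 256

/-- Shen's sixth-order conservative approximation of the second derivative at cell `j`. -/
noncomputable def shenSchemeU (Δx : ℝ) (u : ℤ → ℂ) (j : ℤ) : ℂ :=
  ((75/64) * (shenFluxU Δx u j - shenFluxU Δx u (j-1))
    + (-25/384) * (shenFluxU Δx u (j+1) - shenFluxU Δx u (j-2))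
    + (3/640) * (shenFluxU Δx u (j+2) - shenFluxU Δx u (j-3))) / Δx

/-- Fourth-order central-difference cell-center gradient applied to a sequence. -/
noncomputable def grad4U (Δx : ℝ) (u : ℤ → ℂ) (m : ℤ) : ℂ :=
  (8 * (u (m+1) - u (m-1)) - (u (m+2) - u (m-2))) / (12 * (Δx : ℂ))

/-- Left quadratic reconstruction at face `j+1/2`. -/
noncomputable def uLrecU (β Δx : ℝ) (u : ℤ → ℂ) (j : ℤ) : ℂ :=
  u j + grad4U Δx u j * Δx / 2 + (β : ℂ) * (u (j+1) - 2 * u j + u (j-1))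

/-- Right quadratic reconstruction at face `j+1/2`. -/
noncomputable def uRrecU (β Δx : ℝ) (u : ℤ → ℂ) (j : ℤ) : ℂ :=
  u (j+1) - grad4U Δx u (j+1) * Δx / 2 + (β : ℂ) * (u (j+2) - 2 * u (j+1) + u j)

/-- α-damping interface gradient (numerical flux) at face `j+1/2`. -/
noncomputable def dampFluxU (α β Δx : ℝ) (u : ℤ → ℂ) (j : ℤ) : ℂ :=
  (grad4U Δx u j + grad4U Δx u (j+1)) / 2
    + ((α / (2 * Δx) : ℝ) : ℂ) * (uRrecU β Δx u j - uLrecU β Δx u j)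

/-- The α-damping conservative approximation of the second derivative at cell `j`. -/
noncomputable def dampSchemeU (α β Δx : ℝ) (u : ℤ → ℂ) (j : ℤ) : ℂ :=
  (dampFluxU α β Δx u j - dampFluxU α β Δx u (j-1)) / Δx

/-! On the sawtooth `u_m = (-1)^m` one has `u_{m+k} = u_{m-k}`, so every antisymmetric
(gradient) stencil annihilates it. Shen's flux is built from gradients alone and hence
vanishes, whereas the α-damping flux also penalises the jump `u_R - u_L` of the two
reconstructions, which on the sawtooth equals `(8β - 2)(-1)^j`. -/

lemma neg_one_zpow_add_eq_sub (m k : ℤ) : (-1 : ℂ) ^ (m + k) = (-1 : ℂ) ^ (m - k) := by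
  have h2k : (-1 : ℂ) ^ (2 * k) = 1 := (even_two_mul k).neg_one_zpow
  rw [show m + k = m - k + 2 * k by ring, zpow_add₀ (by norm_num), h2k, mul_one]

section SymmetricSequence

variable {Δx : ℝ} {u : ℤ → ℂ} {m : ℤ}

lemma grad6U_eq_zero_of_symm (hu : ∀ k, u (m + k) = u (m - k)) : grad6U Δx u m = 0 := by
  simp only [grad6U, hu, sub_self, mul_zero, add_zero, zero_div]

lemma grad4U_eq_zero_of_symm (hu : ∀ k, u (m + k) = u (m - k)) : grad4U Δx u m = 0 := by
  simp only [grad4U, hu, sub_self, mul_zero, zero_div]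

end SymmetricSequence

lemma shenSchemeU_eq_zero_of_grad6U_eq_zero {Δx : ℝ} {u : ℤ → ℂ}
    (hgrad : ∀ m, grad6U Δx u m = 0) (j : ℤ) : shenSchemeU Δx u j = 0 := by
  simp only [shenSchemeU, shenFluxU, hgrad]
  ring

lemma dampFluxU_of_grad4U_eq_zero {α β Δx : ℝ} {u : ℤ → ℂ}
    (hgrad : ∀ m, grad4U Δx u m = 0) (j : ℤ) :
    dampFluxU α β Δx u j = α / (2 * Δx) *
      (u (j + 1) - u j + β * (u (j + 2) - 3 * u (j + 1) + 3 * u j - u (j - 1))) := by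
  simp only [dampFluxU, uRrecU, uLrecU, hgrad]
  push_cast
  ring

lemma grad4U_sawtooth (Δx : ℝ) (m : ℤ) : grad4U Δx (fun m => (-1 : ℂ) ^ m) m = 0 :=
  grad4U_eq_zero_of_symm (neg_one_zpow_add_eq_sub m)

lemma shenSchemeU_sawtooth (Δx : ℝ) (j : ℤ) : shenSchemeU Δx (fun m => (-1 : ℂ) ^ m) j = 0 :=
  shenSchemeU_eq_zero_of_grad6U_eq_zero
    (fun m => grad6U_eq_zero_of_symm (neg_one_zpow_add_eq_sub m)) j

lemma dampFluxU_sawtooth (α β Δx : ℝ) (j : ℤ) :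
    dampFluxU α β Δx (fun m => (-1 : ℂ) ^ m) j = α * (4 * β - 1) * (-1 : ℂ) ^ j / Δx := by
  have h₀ : (-1 : ℂ) ≠ 0 := by norm_num
  rw [dampFluxU_of_grad4U_eq_zero (grad4U_sawtooth Δx)]
  simp only [zpow_add₀ h₀, zpow_sub₀ h₀, zpow_one, zpow_two]
  ring

lemma dampSchemeU_sawtooth (α β Δx : ℝ) (j : ℤ) :
    dampSchemeU α β Δx (fun m => (-1 : ℂ) ^ m) j
      = 2 * α * (4 * β - 1) * (-1 : ℂ) ^ j / (Δx : ℂ) ^ 2 := by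
  simp only [dampSchemeU, dampFluxU_sawtooth, zpow_sub_one₀ (show (-1 : ℂ) ≠ 0 by norm_num)]
  ring

/-- on the pure odd-even (sawtooth) mode `u_j = (−1)^j`, Shen's scheme is
exactly zero at every point, while the sixth-order α-damping scheme returns
`(−272/45)(−1)^j/Δx² ≠ 0`. -/
theorem schemes_on_sawtooth (Δx : ℝ) (hΔx : Δx ≠ 0) (j : ℤ) :
    shenSchemeU Δx (fun m => (-1 : ℂ)^m) j = 0
    ∧ dampSchemeU (38/15) (-11/228) Δx (fun m => (-1 : ℂ)^m) j
        = (-272/45 : ℂ) * (-1 : ℂ)^j / ((Δx : ℂ)^2)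
    ∧ (-272/45 : ℂ) * (-1 : ℂ)^j / ((Δx : ℂ)^2) ≠ 0 := by
  refine ⟨shenSchemeU_sawtooth Δx j, ?_, ?_⟩
  · rw [dampSchemeU_sawtooth]
    push_cast
    norm_num
  · have hΔ : (Δx : ℂ) ≠ 0 := Complex.ofReal_ne_zero.mpr hΔx
    exact div_ne_zero (mul_ne_zero (by norm_num) (zpow_ne_zero _ (by norm_num)))
      (pow_ne_zero _ hΔ)
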